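/- For every unit vector z ∈ ℂ³, the product η(z)·conj(η(z)) equals 2·z·(conj z)ᵗ − 1, where η(z) = z·zᵗ + M(conj z), conj denotes entry-wise complex conjugation of the matrix, and 1 is the 3×3 identity matrix. -/

import Mathlib

/-- Skew-symmetric 3×3 matrix with M₁₂ = −w₃, M₁₃ = w₂, M₂₃ = −w₁. -/
def skewM (w : Fin 3 → ℂ) : Matrix (Fin 3) (Fin 3) ℂ :=
  !![0, -w 2, w 1; w 2, 0, -w 0; -w 1, w 0, 0]

/-- η(z) = z·zᵗ + M(conj z). -/
def eta (z : Fin 3 → ℂ) : Matrix (Fin 3) (Fin 3) ℂ :=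
  Matrix.of (fun i j => z i * z j) + skewM (fun i => star (z i))

set_option maxHeartbeats 1000000 in
theorem eta_mul_conj_eta (z : Fin 3 → ℂ) (hz : ∑ i, ‖z i‖ ^ 2 = 1) :
    eta z * (eta z).map (starRingEnd ℂ) =
      Matrix.of (fun i j => 2 * z i * star (z j)) - 1 := by
  have key : ∀ i, z i * star (z i) = ((‖z i‖ ^ 2 : ℝ) : ℂ) := by
    intro i
    rw [Complex.star_def, Complex.mul_conj, Complex.normSq_eq_norm_sq]
  have h : z 0 * (starRingEnd ℂ) (z 0) + z 1 * (starRingEnd ℂ) (z 1) + z 2 * (starRingEnd ℂ) (z 2) = 1 := by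
    simp only [← Complex.star_def]
    rw [key 0, key 1, key 2]
    rw [Fin.sum_univ_three] at hz
    exact_mod_cast congrArg (Complex.ofReal) hz
  ext i j
  fin_cases i <;> fin_cases j <;>
    simp [eta, skewM, Matrix.mul_apply, Fin.sum_univ_three, Matrix.one_apply,
      Matrix.vecHead, Matrix.vecTail, Complex.star_def] <;>
    first
      | linear_combination (z 0 * (starRingEnd ℂ) (z 0) - 1) * h
      | linear_combination (z 1 * (starRingEnd ℂ) (z 1) - 1) * h
      | linear_combination (z 2 * (starRingEnd ℂ) (z 2) - 1) * h
      | linear_combination (z 0 * (starRingEnd ℂ) (z 1)) * h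
      | linear_combination (z 0 * (starRingEnd ℂ) (z 2)) * h
      | linear_combination (z 1 * (starRingEnd ℂ) (z 0)) * h
      | linear_combination (z 1 * (starRingEnd ℂ) (z 2)) * h
      | linear_combination (z 2 * (starRingEnd ℂ) (z 0)) * h
      | linear_combination (z 2 * (starRingEnd ℂ) (z 1)) * h
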